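/- Fix one customer, a finite set D of facilities with weights a_d > 0, competitor mass b > 0, and availability z ∈ {0,1}^D; let A = Σ_d a_d·z_d. Suppose nonnegative reals (w_d)_{d∈D} and ŵ satisfy: (i) ŵ + Σ_d w_d ≤ 1; (ii) a_d·(w_d − z_d) + b·w_d ≤ 0 for all d; and (iii) w_d ≤ (a_d/b)·ŵ for all d. Then Σ_d w_d ≤ A/(A + b); i.e., the total feasible captured probability never exceeds the MNL captured probability, and it is attained by setting w_d = a_d·z_d/(A + b) and ŵ = b/(A + b). -/

import Mathlib

/-!
A closed facility (`z d = 0`) is forced to `w d ≤ 0` by (ii), and an open one satisfies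
`w d ≤ (a d / b) ŵ` by (iii); in both cases `b w d ≤ a d z d ŵ`. Summing gives
`b Σ w ≤ A ŵ ≤ A (1 - Σ w)` by (i), i.e. `Σ w ≤ A / (A + b)`. The MNL probabilities are
feasible because a single open weight `a d` never exceeds `A`.
-/

open Finset

theorem haase_le_of_binary {a b z w wE : ℝ} (ha : 0 ≤ a) (hb : 0 < b) (hz : z = 0 ∨ z = 1)
    (h2 : a * (w - z) + b * w ≤ 0) (h3 : w ≤ a / b * wE) : w ≤ a * z / b * wE := by
  rcases hz with rfl | rfl
  · have : (a + b) * w ≤ 0 := by linarith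
    simpa using nonpos_of_mul_nonpos_right this (by linarith)
  · simpa using h3

theorem le_div_add_of_mul_le {A b S wE : ℝ} (hA : 0 ≤ A) (hb : 0 < b)
    (hS : b * S ≤ A * wE) (h1 : wE + S ≤ 1) : S ≤ A / (A + b) := by
  have : A * wE ≤ A * (1 - S) := mul_le_mul_of_nonneg_left (by linarith) hA
  rw [le_div_iff₀ (by linarith)]
  linarith

theorem mnl_mul_sub_add_nonpos {a b z A : ℝ} (ha : 0 ≤ a) (hAb : 0 < A + b)
    (hz : z = 0 ∨ z = 1) (haA : z = 1 → a ≤ A) :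
    a * (a * z / (A + b) - z) + b * (a * z / (A + b)) ≤ 0 := by
  rcases hz with rfl | rfl
  · simp
  · have : a * (a * 1 / (A + b) - 1) + b * (a * 1 / (A + b)) = a * (a - A) / (A + b) := by
      field_simp
      ring
    rw [this]
    exact div_nonpos_of_nonpos_of_nonneg
      (mul_nonpos_of_nonneg_of_nonpos ha (sub_nonpos.2 (haA rfl))) hAb.le

theorem mnl_le_mul_div {a b z A : ℝ} (ha : 0 ≤ a) (hb : 0 < b) (hAb : 0 < A + b) (hz : z ≤ 1) :
    a * z / (A + b) ≤ a / b * (b / (A + b)) := by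
  rw [div_mul_div_cancel₀ hb.ne']
  gcongr
  exact mul_le_of_le_one_right ha hz

theorem mul_nonneg_of_binary {a z : ℝ} (ha : 0 ≤ a) (hz : z = 0 ∨ z = 1) : 0 ≤ a * z := by
  rcases hz with rfl | rfl <;> simp [ha]

section Binary

variable {D : Type*} [Fintype D] {a z : D → ℝ}

theorem sum_mul_binary_nonneg (ha : ∀ d, 0 ≤ a d) (hz : ∀ d, z d = 0 ∨ z d = 1) :
    0 ≤ ∑ d, a d * z d :=
  sum_nonneg fun d _ => mul_nonneg_of_binary (ha d) (hz d)

theorem le_sum_mul_of_eq_one (ha : ∀ d, 0 ≤ a d) (hz : ∀ d, z d = 0 ∨ z d = 1) {d : D}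
    (hd : z d = 1) : a d ≤ ∑ d, a d * z d := by
  simpa [hd] using single_le_sum (f := fun d => a d * z d)
    (fun i _ => mul_nonneg_of_binary (ha i) (hz i)) (mem_univ d)

end Binary

theorem stmt_13_general {D : Type*} [Fintype D] (a : D → ℝ) (z : D → ℝ) (b : ℝ)
    (ha : ∀ d, 0 < a d) (hb : 0 < b) (hz : ∀ d, z d = 0 ∨ z d = 1)
    (A : ℝ) (hA : A = ∑ d, a d * z d)
    (w : D → ℝ) (wE : ℝ)
    (h1 : wE + ∑ d, w d ≤ 1)
    (h2 : ∀ d, a d * (w d - z d) + b * w d ≤ 0)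
    (h3 : ∀ d, w d ≤ (a d / b) * wE) :
    (∑ d, w d ≤ A / (A + b)) ∧
    ((b / (A + b) + ∑ d, a d * z d / (A + b) ≤ 1) ∧
      (∀ d, a d * (a d * z d / (A + b) - z d) + b * (a d * z d / (A + b)) ≤ 0) ∧
      (∀ d, a d * z d / (A + b) ≤ (a d / b) * (b / (A + b))) ∧
      ∑ d, a d * z d / (A + b) = A / (A + b)) := by
  have ha' d : 0 ≤ a d := (ha d).le
  have hA0 : 0 ≤ A := hA ▸ sum_mul_binary_nonneg ha' hz
  have hAb : 0 < A + b := by linarith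
  have hmnl : ∑ d, a d * z d / (A + b) = A / (A + b) := by rw [← sum_div, hA]
  have hcapture : b * ∑ d, w d ≤ A * wE := by
    calc b * ∑ d, w d ≤ b * ∑ d, a d * z d / b * wE :=
          mul_le_mul_of_nonneg_left
            (sum_le_sum fun d _ => haase_le_of_binary (ha' d) hb (hz d) (h2 d) (h3 d)) hb.le
      _ = A * wE := by rw [← sum_mul, ← sum_div, ← hA]; field_simp
  refine ⟨le_div_add_of_mul_le hA0 hb hcapture h1, ?_, fun d => ?_, fun d => ?_, hmnl⟩
  · rw [hmnl, ← add_div, add_comm, div_self hAb.ne']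
  · exact mnl_mul_sub_add_nonpos (ha' d) hAb (hz d)
      fun hd => hA ▸ le_sum_mul_of_eq_one ha' hz hd
  · exact mnl_le_mul_div (ha' d) hb hAb (by rcases hz d with h | h <;> simp [h])

/-- Correctness of the Haase reformulation for a fixed opening decision: any
feasible `(w, wE)` captures at most the MNL probability `A / (A + b)`, and this
value is attained by the MNL probabilities themselves. -/
theorem stmt_13 {D : Type*} [Fintype D] (a : D → ℝ) (z : D → ℝ) (b : ℝ)
    (ha : ∀ d, 0 < a d) (hb : 0 < b) (hz : ∀ d, z d = 0 ∨ z d = 1)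
    (A : ℝ) (hA : A = ∑ d, a d * z d)
    (w : D → ℝ) (wE : ℝ) (hwpos : ∀ d, 0 ≤ w d) (hwEpos : 0 ≤ wE)
    (h1 : wE + ∑ d, w d ≤ 1)
    (h2 : ∀ d, a d * (w d - z d) + b * w d ≤ 0)
    (h3 : ∀ d, w d ≤ (a d / b) * wE) :
    (∑ d, w d ≤ A / (A + b)) ∧
    ((b / (A + b) + ∑ d, a d * z d / (A + b) ≤ 1) ∧
      (∀ d, a d * (a d * z d / (A + b) - z d) + b * (a d * z d / (A + b)) ≤ 0) ∧
      (∀ d, a d * z d / (A + b) ≤ (a d / b) * (b / (A + b))) ∧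
      ∑ d, a d * z d / (A + b) = A / (A + b)) :=
  stmt_13_general a z b ha hb hz A hA w wE h1 h2 h3
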